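/- Consider the robust one-bit compressed sensing link function f(z) = 2·P(z + ε > 0) − 1 where ε ~ N(0, σ²) with σ > 0. Then μ₁ ≥ √(2/π)·(1/σ)·(σ²/(1 + σ²))^{3/2}, and consequently φ(f) = μ₁² ≥ (2/π)·σ⁴/(1 + σ²)³ > 0 for every σ > 0. -/

import Mathlib

/-!
Let `p_v` be the density and `Φ_v` the distribution function of `N(0, v)`, with `v = σ²`. The
link function is `f = 2Φ_v - 1`, which is odd, so `μ₀ = 0` and `φ(f) = μ₁²`. Stein's identity
`E[g(Z) Z] = E[g'(Z)]` gives `μ₁ = 2 E[p_v(Z)] = 2 ∫ p_1 p_v = 2 p_{1+v}(0) = 2 / √(2π(1+σ²))`,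
twice the density of `Z + ε` at the origin. Both inequalities then reduce to `σ⁴ ≤ (1 + σ²)²`.
-/

open MeasureTheory ProbabilityTheory Real Set
open scoped NNReal

/-- The Gaussian moments `μ_k = E[f(Z) Z^k]` for `Z ~ N(0,1)`. -/
noncomputable def gaussMoment (f : ℝ → ℝ) (k : ℕ) : ℝ :=
  ∫ z, f z * z ^ k ∂(gaussianReal 0 1)

/-- `φ(f) = μ₁² − μ₀μ₂ + μ₀²`. -/
noncomputable def phiFun (f : ℝ → ℝ) : ℝ :=
  gaussMoment f 1 ^ 2 - gaussMoment f 0 * gaussMoment f 2 + gaussMoment f 0 ^ 2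

namespace ProbabilityTheory

variable {v : ℝ≥0}

lemma continuous_gaussianPDFReal (μ : ℝ) (v : ℝ≥0) : Continuous (gaussianPDFReal μ v) := by
  rw [gaussianPDFReal_def]
  fun_prop

lemma hasDerivAt_gaussianPDFReal (μ : ℝ) (v : ℝ≥0) (x : ℝ) :
    HasDerivAt (gaussianPDFReal μ v) (-((x - μ) / v * gaussianPDFReal μ v x)) x := by
  have h : HasDerivAt (fun y => -(y - μ) ^ 2 / (2 * v)) (-(x - μ) / v) x := by
    refine ((((hasDerivAt_id x).sub_const μ).pow 2).neg.div_const (2 * (v : ℝ))).congr_deriv ?_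
    by_cases hv : (v : ℝ) = 0
    · simp [hv]
    · field_simp
      simp
  rw [gaussianPDFReal_def]
  exact (h.exp.const_mul _).congr_deriv (by ring)

lemma gaussianPDFReal_le_gaussianPDFReal_mean (μ : ℝ) (v : ℝ≥0) (x : ℝ) :
    gaussianPDFReal μ v x ≤ gaussianPDFReal μ v μ := by
  simp only [gaussianPDFReal_def, sub_self]
  refine mul_le_mul_of_nonneg_left (exp_le_exp.2 ?_) (by positivity)
  rw [zero_pow two_ne_zero, neg_zero, zero_div]
  exact div_nonpos_of_nonpos_of_nonneg (neg_nonpos.2 (sq_nonneg _)) (by positivity)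

lemma sq_gaussianPDFReal_mean (μ : ℝ) (v : ℝ≥0) :
    gaussianPDFReal μ v μ ^ 2 = (2 * π * v)⁻¹ := by
  simp only [gaussianPDFReal_def, sub_self, zero_pow two_ne_zero, neg_zero, zero_div, exp_zero,
    mul_one, inv_pow]
  rw [sq_sqrt (by positivity)]

lemma integral_gaussianPDFReal_mul_gaussianPDFReal {v w : ℝ≥0} (hv : v ≠ 0) (hw : w ≠ 0) :
    ∫ x, gaussianPDFReal 0 v x * gaussianPDFReal 0 w x = gaussianPDFReal 0 (v + w) 0 := by
  have hv' : (0 : ℝ) < v := by positivity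
  have hw' : (0 : ℝ) < w := by positivity
  have hprod (x : ℝ) : gaussianPDFReal 0 v x * gaussianPDFReal 0 w x
      = (√(2 * π * v))⁻¹ * (√(2 * π * w))⁻¹ * rexp (-((v + w) / (2 * v * w)) * x ^ 2) := by
    simp only [gaussianPDFReal, sub_zero]
    rw [mul_mul_mul_comm, ← exp_add]
    congr 2
    field_simp
    ring
  simp_rw [hprod]
  rw [integral_const_mul, integral_gaussian]
  simp only [gaussianPDFReal, sub_zero, NNReal.coe_add, zero_pow two_ne_zero, neg_zero,
    zero_div, exp_zero, mul_one]
  rw [← sqrt_inv, ← sqrt_inv, ← sqrt_mul (by positivity), ← sqrt_mul (by positivity),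
    ← sqrt_inv]
  congr 1
  field_simp

lemma integrable_gaussianReal_iff {μ : ℝ} {E : Type*} [NormedAddCommGroup E] [NormedSpace ℝ E]
    {g : ℝ → E} (hv : v ≠ 0) :
    Integrable g (gaussianReal μ v) ↔ Integrable (fun x => gaussianPDFReal μ v x • g x) := by
  rw [gaussianReal_of_var_ne_zero _ hv, integrable_withDensity_iff_integrable_smul'
    (measurable_gaussianPDF _ _) (ae_of_all _ fun _ => gaussianPDF_lt_top)]
  simp only [toReal_gaussianPDF]

theorem integral_mul_id_gaussianReal_eq_integral_deriv {g g' : ℝ → ℝ}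
    (hg : ∀ x, HasDerivAt g (g' x) x) {C : ℝ} (hC : ∀ x, |g x| ≤ C)
    (hg' : Integrable g' (gaussianReal 0 1)) :
    ∫ x, g x * x ∂gaussianReal 0 1 = ∫ x, g' x ∂gaussianReal 0 1 := by
  have hφ (x : ℝ) : HasDerivAt (-gaussianPDFReal 0 1) (x * gaussianPDFReal 0 1 x) x :=
    (hasDerivAt_gaussianPDFReal 0 1 x).neg.congr_deriv (by simp)
  have hg_meas : AEStronglyMeasurable g :=
    (continuous_iff_continuousAt.2 fun x => (hg x).continuousAt).aestronglyMeasurable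
  have hg_bdd : ∀ᵐ x, ‖g x‖ ≤ C := ae_of_all _ hC
  have hidφ : Integrable (fun x => x * gaussianPDFReal 0 1 x) := by
    simpa [mul_comm] using (integrable_gaussianReal_iff one_ne_zero (μ := 0) (g := id)).1
      ((memLp_id_gaussianReal 1).integrable le_rfl)
  have hg'φ : Integrable (g' * -gaussianPDFReal 0 1) := by
    have := ((integrable_gaussianReal_iff one_ne_zero).1 hg').neg
    simp only [smul_eq_mul] at this
    exact this.congr (ae_of_all _ fun x => by simp [mul_comm])
  have hibp := integral_mul_deriv_eq_deriv_mul_of_integrable (fun x _ => hg x) (fun x _ => hφ x)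
    (hidφ.bdd_mul hg_meas hg_bdd) hg'φ
    ((integrable_gaussianPDFReal 0 1).neg.bdd_mul hg_meas hg_bdd)
  simp_rw [integral_gaussianReal_eq_integral_smul one_ne_zero, smul_eq_mul]
  simpa [integral_neg, mul_comm, mul_left_comm, mul_assoc] using hibp

lemma integral_gaussianReal_eq_zero_of_odd {g : ℝ → ℝ} (hg : ∀ x, g (-x) = -g x) :
    ∫ x, g x ∂gaussianReal 0 v = 0 := by
  have h := integral_map_equiv (MeasurableEquiv.neg ℝ) g (μ := gaussianReal 0 v)
  simp only [MeasurableEquiv.neg_apply, hg, integral_neg] at h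
  rw [gaussianReal_map_neg, neg_zero] at h
  linarith

lemma hasDerivAt_cdf_gaussianReal (μ : ℝ) (hv : v ≠ 0) (x : ℝ) :
    HasDerivAt (cdf (gaussianReal μ v)) (gaussianPDFReal μ v x) x := by
  have hφ := integrable_gaussianPDFReal μ v
  have hcdf : cdf (gaussianReal μ v) = fun t =>
      (∫ y in Iic 0, gaussianPDFReal μ v y) + ∫ y in 0..t, gaussianPDFReal μ v y := by
    ext t
    rw [cdf_eq_real, measureReal_def, gaussianReal_apply_eq_integral μ hv,
      ENNReal.toReal_ofReal (setIntegral_nonneg measurableSet_Iic fun y _ =>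
        gaussianPDFReal_nonneg μ v y),
      ← intervalIntegral.integral_Iic_sub_Iic hφ.integrableOn hφ.integrableOn]
    ring
  rw [hcdf]
  exact (intervalIntegral.integral_hasDerivAt_right hφ.intervalIntegrable
    hφ.aestronglyMeasurable.stronglyMeasurableAtFilter
    (continuous_gaussianPDFReal μ v).continuousAt).const_add _

lemma gaussianReal_real_Ioi_neg (hv : v ≠ 0) (x : ℝ) :
    (gaussianReal 0 v).real (Ioi (-x)) = cdf (gaussianReal 0 v) x := by
  have := nullSingletonClass_gaussianReal (μ := 0) hv
  have hsymm : (gaussianReal 0 v).map (fun y => -y) = gaussianReal 0 v := by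
    simpa using gaussianReal_map_neg (μ := 0) (v := v)
  have hpre : (fun y : ℝ => -y) ⁻¹' Ioi (-x) = Iio x := by
    ext y
    simp
  rw [cdf_eq_real, ← hsymm, map_measureReal_apply measurable_neg measurableSet_Ioi, hsymm, hpre]
  exact measureReal_congr Iio_ae_eq_Iic

lemma cdf_gaussianReal_neg (hv : v ≠ 0) (x : ℝ) :
    cdf (gaussianReal 0 v) (-x) = 1 - cdf (gaussianReal 0 v) x := by
  rw [← gaussianReal_real_Ioi_neg hv, ← compl_Iic, probReal_compl_eq_one_sub measurableSet_Iic,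
    cdf_eq_real, neg_neg]

end ProbabilityTheory

section LinkFunction

variable {v : ℝ≥0}

lemma gaussianReal_pos_add_eq_cdf (hv : v ≠ 0) (z : ℝ) :
    ((gaussianReal 0 v) {u : ℝ | 0 < z + u}).toReal = cdf (gaussianReal 0 v) z := by
  have hset : {u : ℝ | 0 < z + u} = Ioi (-z) := by
    ext u
    simp [neg_lt_iff_pos_add, add_comm]
  rw [hset, ← measureReal_def, gaussianReal_real_Ioi_neg hv]

lemma gaussMoment_zero_two_mul_cdf_sub_one (hv : v ≠ 0) :
    gaussMoment (fun z => 2 * cdf (gaussianReal 0 v) z - 1) 0 = 0 := by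
  refine integral_gaussianReal_eq_zero_of_odd fun z => ?_
  simp only [pow_zero, mul_one, cdf_gaussianReal_neg hv]
  ring

lemma gaussMoment_one_two_mul_cdf_sub_one (hv : v ≠ 0) :
    gaussMoment (fun z => 2 * cdf (gaussianReal 0 v) z - 1) 1
      = 2 * gaussianPDFReal 0 (1 + v) 0 := by
  have hderiv (z : ℝ) : HasDerivAt (fun z => 2 * cdf (gaussianReal 0 v) z - 1)
      (2 * gaussianPDFReal 0 v z) z :=
    ((hasDerivAt_cdf_gaussianReal 0 hv z).const_mul 2).sub_const 1
  have hbdd (z : ℝ) : |2 * cdf (gaussianReal 0 v) z - 1| ≤ 1 :=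
    abs_le.2 ⟨by linarith [cdf_nonneg (gaussianReal 0 v) z],
      by linarith [cdf_le_one (gaussianReal 0 v) z]⟩
  have hint : Integrable (fun z => 2 * gaussianPDFReal 0 v z) (gaussianReal 0 1) := by
    refine Integrable.of_bound (by fun_prop) (2 * gaussianPDFReal 0 v 0)
      (ae_of_all _ fun z => ?_)
    rw [norm_of_nonneg (mul_nonneg zero_le_two (gaussianPDFReal_nonneg 0 v z))]
    exact mul_le_mul_of_nonneg_left (gaussianPDFReal_le_gaussianPDFReal_mean 0 v z) zero_le_two
  simp only [gaussMoment, pow_one]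
  rw [integral_mul_id_gaussianReal_eq_integral_deriv hderiv hbdd hint,
    integral_gaussianReal_eq_integral_smul one_ne_zero]
  simp only [smul_eq_mul, mul_left_comm _ (2 : ℝ)]
  rw [integral_const_mul, integral_gaussianPDFReal_mul_gaussianPDFReal one_ne_zero hv]

end LinkFunction

lemma sq_sqrt_two_div_pi_mul_rpow {σ : ℝ} (hσ : 0 < σ) :
    (√(2 / π) * (1 / σ) * (σ ^ 2 / (1 + σ ^ 2)) ^ ((3 : ℝ) / 2)) ^ 2
      = 2 / π * σ ^ 4 / (1 + σ ^ 2) ^ 3 := by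
  rw [mul_pow, mul_pow, sq_sqrt (by positivity), ← rpow_mul_natCast (by positivity),
    show (3 : ℝ) / 2 * (2 : ℕ) = (3 : ℕ) by norm_num, rpow_natCast]
  field_simp

lemma two_div_pi_mul_pow_four_div_le (σ : ℝ) :
    2 / π * σ ^ 4 / (1 + σ ^ 2) ^ 3 ≤ 2 / (π * (1 + σ ^ 2)) := by
  rw [div_le_div_iff₀ (by positivity) (by positivity)]
  have := pi_pos
  field_simp
  nlinarith [sq_nonneg σ]

/-- For the robust one-bit compressed sensing link function
`f(z) = 2·P(z + ε > 0) − 1` with `ε ~ N(0, σ²)`, `σ > 0`: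
`μ₁ ≥ √(2/π)·(1/σ)·(σ²/(1+σ²))^{3/2}`, and consequently
`φ(f) = μ₁² ≥ (2/π)·σ⁴/(1+σ²)³ > 0` for every `σ > 0`. -/
theorem robust_one_bit_cs_phi_all_noise (σ : ℝ) (hσ : 0 < σ) (f : ℝ → ℝ)
    (hf : f = fun z =>
      2 * ((gaussianReal 0 (Real.toNNReal (σ ^ 2))) {u : ℝ | 0 < z + u}).toReal - 1) :
    Real.sqrt (2 / Real.pi) * (1 / σ) * (σ ^ 2 / (1 + σ ^ 2)) ^ ((3 : ℝ) / 2)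
        ≤ gaussMoment f 1 ∧
    phiFun f = gaussMoment f 1 ^ 2 ∧
    (2 / Real.pi) * σ ^ 4 / (1 + σ ^ 2) ^ 3 ≤ phiFun f ∧
    0 < phiFun f := by
  set v := (σ ^ 2).toNNReal
  have hv : v ≠ 0 := by simpa [v] using hσ.ne'
  have hf' : f = fun z => 2 * cdf (gaussianReal 0 v) z - 1 := by
    simp_rw [hf, gaussianReal_pos_add_eq_cdf hv]
  have hμ₁ : gaussMoment f 1 = 2 * gaussianPDFReal 0 (1 + v) 0 :=
    hf' ▸ gaussMoment_one_two_mul_cdf_sub_one hv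
  have hphi : phiFun f = gaussMoment f 1 ^ 2 := by
    simp [phiFun, hf', gaussMoment_zero_two_mul_cdf_sub_one hv]
  have hμ₁_sq : gaussMoment f 1 ^ 2 = 2 / (π * (1 + σ ^ 2)) := by
    rw [hμ₁, mul_pow, sq_gaussianPDFReal_mean]
    push_cast [v, Real.coe_toNNReal _ (sq_nonneg σ)]
    field_simp
  have hbound : 2 / π * σ ^ 4 / (1 + σ ^ 2) ^ 3 ≤ gaussMoment f 1 ^ 2 :=
    hμ₁_sq ▸ two_div_pi_mul_pow_four_div_le σ
  refine ⟨?_, hphi, hphi ▸ hbound, hphi ▸ hμ₁_sq ▸ by positivity⟩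
  rw [← pow_le_pow_iff_left₀ (by positivity)
    (hμ₁ ▸ mul_nonneg zero_le_two (gaussianPDFReal_nonneg _ _ _)) two_ne_zero,
    sq_sqrt_two_div_pi_mul_rpow hσ]
  exact hbound
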